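/- arXiv:2411.04921 — 6 statements merged into one kernel-verified Lean document; each statement's English description precedes it below -/
import Mathlib

section
/- Let L ⊂ (0,1) be a closed set with empty interior and Lebesgue measure zero, whose complement in (0,1) is the countable disjoint union of open intervals (aₙ, bₙ). Let λ be a finite atomless Borel measure on (0,1) concentrated on L, and define f(x) = λ((0,x)). Then the set U' = ⋃ₙ (aₙ + f(aₙ), bₙ + f(aₙ)) consists of pairwise disjoint intervals and has Lebesgue measure 1. -/
open MeasureTheory Set

/-- One-dimensional grafting: let `L ⊂ (0,1)` be closed in `(0,1)`, with empty interior
and Lebesgue measure zero, whose complement in `(0,1)` is the disjoint union of the open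
intervals `(aₙ, bₙ)`.  Let `λ` be a finite atomless Borel measure concentrated on `L`
and `f x = λ((0,x))`.  Then the translated intervals
`(aₙ + f(aₙ), bₙ + f(aₙ))` are pairwise disjoint and their union has Lebesgue measure 1. -/
theorem statement_2 (L : Set ℝ) (a b : ℕ → ℝ) (lam : Measure ℝ) [IsFiniteMeasure lam]
    (hL : L ⊆ Ioo (0:ℝ) 1)
    (hclosed : ∃ C : Set ℝ, IsClosed C ∧ L = C ∩ Ioo (0:ℝ) 1)
    (hint : interior L = ∅)
    (hnull : volume L = 0)
    (hab : ∀ n, a n < b n)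
    (hcompl : Ioo (0:ℝ) 1 \ L = ⋃ n, Ioo (a n) (b n))
    (hdisj : Pairwise (Function.onFun Disjoint fun n => Ioo (a n) (b n)))
    (hconc : lam Lᶜ = 0)
    (hatomless : ∀ x : ℝ, lam {x} = 0) :
    (Pairwise (Function.onFun Disjoint fun n =>
        Ioo (a n + (lam (Ioo 0 (a n))).toReal) (b n + (lam (Ioo 0 (a n))).toReal))) ∧
    volume (⋃ n, Ioo (a n + (lam (Ioo 0 (a n))).toReal)
        (b n + (lam (Ioo 0 (a n))).toReal)) = 1 := by
  have hmono : ∀ m n : ℕ, a m ≤ a n →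
      (lam (Ioo 0 (a m))).toReal ≤ (lam (Ioo 0 (a n))).toReal := fun m n h =>
    ENNReal.toReal_mono (measure_ne_top lam _) (measure_mono (Ioo_subset_Ioo le_rfl h))
  have hdisj' : Pairwise (Function.onFun Disjoint fun n =>
      Ioo (a n + (lam (Ioo 0 (a n))).toReal) (b n + (lam (Ioo 0 (a n))).toReal)) := by
    intro m n hmn
    have hsep : b m ≤ a n ∨ b n ≤ a m := by
      by_contra hcon
      push_neg at hcon
      obtain ⟨h1, h2⟩ := hcon
      have hlt : max (a m) (a n) < min (b m) (b n) :=
        max_lt (lt_min (hab m) h2) (lt_min h1 (hab n))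
      obtain ⟨y, hy1, hy2⟩ := exists_between hlt
      exact Set.disjoint_left.mp (hdisj hmn)
        ⟨(le_max_left _ _).trans_lt hy1, hy2.trans_le (min_le_left _ _)⟩
        ⟨(le_max_right _ _).trans_lt hy1, hy2.trans_le (min_le_right _ _)⟩
    have key : ∀ u v : ℕ, b u ≤ a v →
        Disjoint (Ioo (a u + (lam (Ioo 0 (a u))).toReal) (b u + (lam (Ioo 0 (a u))).toReal))
          (Ioo (a v + (lam (Ioo 0 (a v))).toReal) (b v + (lam (Ioo 0 (a v))).toReal)) := by
      intro u v huv
      have h1 : a u ≤ a v := (hab u).le.trans huv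
      refine Set.disjoint_left.mpr fun x hx hx' => ?_
      have : x < b u + (lam (Ioo 0 (a u))).toReal := hx.2
      have h2 : b u + (lam (Ioo 0 (a u))).toReal ≤ a v + (lam (Ioo 0 (a v))).toReal :=
        add_le_add huv (hmono u v h1)
      exact absurd (this.trans_le h2) (not_lt.mpr hx'.1.le)
    rcases hsep with h | h
    · exact key m n h
    · exact (key n m h).symm
  refine ⟨hdisj', ?_⟩
  rw [measure_iUnion hdisj' (fun n => measurableSet_Ioo)]
  have hlen : ∀ n, volume (Ioo (a n + (lam (Ioo 0 (a n))).toReal)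
      (b n + (lam (Ioo 0 (a n))).toReal)) = volume (Ioo (a n) (b n)) := by
    intro n
    rw [Real.volume_Ioo, Real.volume_Ioo]
    ring_nf
  simp_rw [hlen]
  rw [← measure_iUnion hdisj (fun n => measurableSet_Ioo), ← hcompl,
    measure_diff_null hnull, Real.volume_Ioo]
  norm_num
end

section
/- With L, λ, f as in the one-dimensional grafting construction, the complement in (0, 1+λ((0,1))) of U' = ⋃ₙ (aₙ + f(aₙ), bₙ + f(aₙ)) is a closed set with empty interior whose Lebesgue measure equals the total mass |λ| = λ((0,1)) (a 'fat Cantor set'). -/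
/-!
The grafting map `g x = x + f x` is strictly increasing, and continuous because `λ` is finite
and atomless; as `g x - x` is bounded it is onto, hence an order isomorphism and a
homeomorphism of `ℝ`. Since `λ` does not charge a gap `(aₙ,bₙ)`, `g` is the translation by
`f(aₙ)` there, so `g` maps the gaps onto the translated intervals and `Ĺ = g((0,1) ∩ L)`.
Homeomorphisms preserve empty interior, and the translated intervals, being disjoint, have
total length `|(0,1) \ L| = 1`, which leaves `(1 + |λ|) - 1 = |λ|` for `Ĺ`.
-/

open MeasureTheory Set Filter Topology

section MassFunction

variable (μ : Measure ℝ) [IsFiniteMeasure μ]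

theorem monotone_measure_Ioo_toReal (c : ℝ) : Monotone fun x => (μ (Ioo c x)).toReal :=
  fun _ _ h => ENNReal.toReal_mono (measure_ne_top _ _) (measure_mono (Ioo_subset_Ioo_right h))

theorem measure_Ioo_toReal_le_add (c u v : ℝ) :
    (μ (Ioo c v)).toReal ≤ (μ (Ioo c u)).toReal + (μ (Ico u v)).toReal := by
  rw [← ENNReal.toReal_add (measure_ne_top _ _) (measure_ne_top _ _)]
  refine ENNReal.toReal_mono (by finiteness) ((measure_mono fun t ht => ?_).trans
    (measure_union_le _ _))
  rcases lt_or_ge t u with h | h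
  exacts [Or.inl ⟨ht.1, h⟩, Or.inr ⟨h, ht.2⟩]

theorem abs_measure_Ioo_toReal_sub_le (c x y : ℝ) :
    |(μ (Ioo c y)).toReal - (μ (Ioo c x)).toReal| ≤ (μ (uIcc x y)).toReal := by
  wlog h : x ≤ y generalizing x y
  · rw [abs_sub_comm, uIcc_comm]
    exact this y x (le_of_not_ge h)
  have hmono : (μ (Ioo c x)).toReal ≤ (μ (Ioo c y)).toReal := monotone_measure_Ioo_toReal μ c h
  have hIco : (μ (Ico x y)).toReal ≤ (μ (Icc x y)).toReal :=
    ENNReal.toReal_mono (measure_ne_top _ _) (measure_mono Ico_subset_Icc_self)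
  rw [abs_of_nonneg (sub_nonneg.2 hmono), uIcc_of_le h]
  linarith [measure_Ioo_toReal_le_add μ c x y]

theorem continuous_measure_Ioo_toReal [NullSingletonClass μ] (c : ℝ) :
    Continuous fun x => (μ (Ioo c x)).toReal := by
  refine continuous_iff_continuousAt.2 fun x => tendsto_iff_dist_tendsto_zero.2 ?_
  have huIcc : ∀ y, uIcc x y ⊆ Icc (x - |y - x|) (x + |y - x|) := fun y =>
    uIcc_subset_Icc ⟨by linarith [abs_nonneg (y - x)], by linarith [abs_nonneg (y - x)]⟩
      ⟨by linarith [neg_abs_le (y - x)], by linarith [le_abs_self (y - x)]⟩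
  refine squeeze_zero (fun _ => dist_nonneg)
    (fun y => (abs_measure_Ioo_toReal_sub_le μ c x y).trans
      (ENNReal.toReal_mono (measure_ne_top _ _) (measure_mono (huIcc y)))) ?_
  have hδ : Tendsto (fun y => |y - x|) (𝓝 x) (𝓝 0) := by
    simpa using (continuous_sub_right x).abs.tendsto x
  rw [← ENNReal.toReal_zero]
  exact (ENNReal.tendsto_toReal ENNReal.zero_ne_top).comp ((tendsto_measure_Icc μ x).comp hδ)

theorem measure_Ioo_toReal_eqOn_of_measure_Ioo_eq_zero [NullSingletonClass μ] {c u v : ℝ}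
    (h : μ (Ioo u v) = 0) :
    EqOn (fun x => (μ (Ioo c x)).toReal) (fun _ => (μ (Ioo c u)).toReal) (Icc u v) := by
  intro x hx
  have hnull : μ (Ico u x) = 0 := by
    rw [← measure_congr Ioo_ae_eq_Ico]
    exact measure_mono_null (Ioo_subset_Ioo_right hx.2) h
  refine le_antisymm ?_ (monotone_measure_Ioo_toReal μ c hx.1)
  simpa [hnull] using measure_Ioo_toReal_le_add μ c u x

end MassFunction

section Graft

variable (μ : Measure ℝ)

def graftingMap (x : ℝ) : ℝ := x + (μ (Ioo 0 x)).toReal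

theorem graftingMap_zero : graftingMap μ 0 = 0 := by simp [graftingMap]

variable [IsFiniteMeasure μ]

theorem graftingMap_strictMono : StrictMono (graftingMap μ) :=
  fun _ _ h => add_lt_add_of_lt_of_le h (monotone_measure_Ioo_toReal μ 0 h.le)

variable [NullSingletonClass μ]

theorem continuous_graftingMap : Continuous (graftingMap μ) :=
  continuous_id.add (continuous_measure_Ioo_toReal μ 0)

theorem graftingMap_surjective : Function.Surjective (graftingMap μ) :=
  (continuous_graftingMap μ).surjective
    (tendsto_atTop_add_right_of_le _ 0 tendsto_id fun _ => ENNReal.toReal_nonneg)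
    (tendsto_atBot_add_right_of_ge _ (μ univ).toReal tendsto_id fun _ =>
      ENNReal.toReal_mono (measure_ne_top _ _) (measure_mono (subset_univ _)))

noncomputable def graftingIso : ℝ ≃o ℝ :=
  StrictMono.orderIsoOfSurjective (graftingMap μ) (graftingMap_strictMono μ)
    (graftingMap_surjective μ)

@[simp]
theorem coe_graftingIso : ⇑(graftingIso μ) = graftingMap μ := rfl

theorem image_graftingMap_Ioo_of_measure_eq_zero {u v : ℝ} (h : μ (Ioo u v) = 0) :
    graftingMap μ '' Ioo u v = Ioo (u + (μ (Ioo 0 u)).toReal) (v + (μ (Ioo 0 u)).toReal) := by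
  rw [← image_add_const_Ioo]
  refine EqOn.image_eq fun x hx => ?_
  simp only [graftingMap,
    measure_Ioo_toReal_eqOn_of_measure_Ioo_eq_zero μ h (Ioo_subset_Icc_self hx)]

theorem image_graftingMap_Ioo_zero_one :
    graftingMap μ '' Ioo 0 1 = Ioo 0 (1 + (μ (Ioo 0 1)).toReal) := by
  rw [← coe_graftingIso, OrderIso.image_Ioo, coe_graftingIso, graftingMap_zero]
  rfl

theorem interior_image_graftingMap_eq_empty {s : Set ℝ} (hs : interior s = ∅) :
    interior (graftingMap μ '' s) = ∅ := by
  rw [← coe_graftingIso, ← OrderIso.coe_toHomeomorph, ← Homeomorph.image_interior, hs,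
    image_empty]

end Graft

section Gaps

variable (μ : Measure ℝ) [IsFiniteMeasure μ] [NullSingletonClass μ] {ι : Type*} {L : Set ℝ}
  {a b : ι → ℝ}

theorem image_graftingMap_gap (hcompl : Ioo 0 1 \ L = ⋃ n, Ioo (a n) (b n)) (hconc : μ Lᶜ = 0)
    (n : ι) :
    graftingMap μ '' Ioo (a n) (b n) =
      Ioo (a n + (μ (Ioo 0 (a n))).toReal) (b n + (μ (Ioo 0 (a n))).toReal) :=
  image_graftingMap_Ioo_of_measure_eq_zero μ <| measure_mono_null
    ((subset_iUnion (fun n => Ioo (a n) (b n)) n).trans (hcompl ▸ fun _ hx => hx.2)) hconc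

theorem iUnion_gap_eq_image_graftingMap (hcompl : Ioo 0 1 \ L = ⋃ n, Ioo (a n) (b n))
    (hconc : μ Lᶜ = 0) :
    ⋃ n, Ioo (a n + (μ (Ioo 0 (a n))).toReal) (b n + (μ (Ioo 0 (a n))).toReal) =
      graftingMap μ '' (Ioo 0 1 \ L) := by
  simp_rw [← image_graftingMap_gap μ hcompl hconc, ← image_iUnion, hcompl]

theorem Ioo_diff_iUnion_gap_eq_image_graftingMap
    (hcompl : Ioo 0 1 \ L = ⋃ n, Ioo (a n) (b n)) (hconc : μ Lᶜ = 0) :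
    Ioo 0 (1 + (μ (Ioo 0 1)).toReal) \
        ⋃ n, Ioo (a n + (μ (Ioo 0 (a n))).toReal) (b n + (μ (Ioo 0 (a n))).toReal) =
      graftingMap μ '' (Ioo 0 1 ∩ L) := by
  rw [iUnion_gap_eq_image_graftingMap μ hcompl hconc, ← image_graftingMap_Ioo_zero_one,
    ← image_sdiff (graftingMap_strictMono μ).injective, sdiff_sdiff_right_self]

theorem volume_iUnion_Ioo_add [Countable ι] {c : ι → ℝ}
    (h : Pairwise (Function.onFun Disjoint fun n => Ioo (a n) (b n)))
    (h' : Pairwise (Function.onFun Disjoint fun n => Ioo (a n + c n) (b n + c n))) :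
    volume (⋃ n, Ioo (a n + c n) (b n + c n)) = volume (⋃ n, Ioo (a n) (b n)) := by
  simp [measure_iUnion h fun _ => measurableSet_Ioo, measure_iUnion h' fun _ => measurableSet_Ioo,
    Real.volume_Ioo]

theorem volume_iUnion_gap_add [Countable ι] (hcompl : Ioo 0 1 \ L = ⋃ n, Ioo (a n) (b n))
    (hdisj : Pairwise (Function.onFun Disjoint fun n => Ioo (a n) (b n))) (hconc : μ Lᶜ = 0)
    (hnull : volume L = 0) :
    volume (⋃ n, Ioo (a n + (μ (Ioo 0 (a n))).toReal) (b n + (μ (Ioo 0 (a n))).toReal)) =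
      1 := by
  have hdisj' : Pairwise (Function.onFun Disjoint fun n =>
      Ioo (a n + (μ (Ioo 0 (a n))).toReal) (b n + (μ (Ioo 0 (a n))).toReal)) := fun m n hmn => by
    simpa only [Function.onFun, ← image_graftingMap_gap μ hcompl hconc,
      disjoint_image_iff (graftingMap_strictMono μ).injective] using hdisj hmn
  rw [volume_iUnion_Ioo_add hdisj hdisj', ← hcompl, measure_sdiff_null hnull, Real.volume_Ioo]
  simp

theorem volume_Ioo_diff_iUnion_gap [Countable ι] (hcompl : Ioo 0 1 \ L = ⋃ n, Ioo (a n) (b n))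
    (hdisj : Pairwise (Function.onFun Disjoint fun n => Ioo (a n) (b n))) (hconc : μ Lᶜ = 0)
    (hnull : volume L = 0) :
    volume (Ioo 0 (1 + (μ (Ioo 0 1)).toReal) \
        ⋃ n, Ioo (a n + (μ (Ioo 0 (a n))).toReal) (b n + (μ (Ioo 0 (a n))).toReal)) =
      ENNReal.ofReal (μ (Ioo 0 1)).toReal := by
  have hsub : ⋃ n, Ioo (a n + (μ (Ioo 0 (a n))).toReal) (b n + (μ (Ioo 0 (a n))).toReal) ⊆
      Ioo 0 (1 + (μ (Ioo 0 1)).toReal) := by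
    rw [iUnion_gap_eq_image_graftingMap μ hcompl hconc, ← image_graftingMap_Ioo_zero_one]
    exact image_mono sdiff_subset
  have hvol := volume_iUnion_gap_add μ hcompl hdisj hconc hnull
  rw [measure_sdiff hsub (MeasurableSet.iUnion fun _ => measurableSet_Ioo).nullMeasurableSet
    (by simp [hvol]), hvol, Real.volume_Ioo, sub_zero,
    ENNReal.ofReal_add zero_le_one ENNReal.toReal_nonneg, ENNReal.ofReal_one,
    ENNReal.add_sub_cancel_left ENNReal.one_ne_top]

end Gaps

theorem statement_3_general (L : Set ℝ) (a b : ℕ → ℝ) (lam : Measure ℝ) [IsFiniteMeasure lam]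
    (hint : interior L = ∅)
    (hnull : volume L = 0)
    (hcompl : Ioo (0:ℝ) 1 \ L = ⋃ n, Ioo (a n) (b n))
    (hdisj : Pairwise (Function.onFun Disjoint fun n => Ioo (a n) (b n)))
    (hconc : lam Lᶜ = 0)
    (hatomless : ∀ x : ℝ, lam {x} = 0)
    (f : ℝ → ℝ) (hf : ∀ x, f x = (lam (Ioo 0 x)).toReal)
    (M : ℝ) (hM : M = (lam (Ioo (0:ℝ) 1)).toReal)
    (Lhat : Set ℝ)
    (hLhat : Lhat = Ioo (0:ℝ) (1 + M) \ ⋃ n, Ioo (a n + f (a n)) (b n + f (a n))) :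
    (∃ C : Set ℝ, IsClosed C ∧ Lhat = C ∩ Ioo (0:ℝ) (1 + M)) ∧
    interior Lhat = ∅ ∧
    volume Lhat = ENNReal.ofReal M := by
  have : NullSingletonClass lam := ⟨hatomless⟩
  simp only [hf] at hLhat
  subst hM hLhat
  refine ⟨⟨_, (isOpen_iUnion fun _ => isOpen_Ioo).isClosed_compl,
    by rw [Set.sdiff_eq, inter_comm]⟩, ?_, ?_⟩
  · rw [Ioo_diff_iUnion_gap_eq_image_graftingMap lam hcompl hconc]
    exact interior_image_graftingMap_eq_empty lam
      (subset_empty_iff.1 (hint ▸ interior_mono inter_subset_right))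
  · exact volume_Ioo_diff_iUnion_gap lam hcompl hdisj hconc hnull

/-- One-dimensional grafting: with `L`, `λ`, `f` as in the construction, the complement
`Ĺ` in `(0, 1+|λ|)` of `U' = ⋃ₙ (aₙ + f(aₙ), bₙ + f(aₙ))` is closed in `(0, 1+|λ|)`,
has empty interior, and has Lebesgue measure equal to the total mass `|λ| = λ((0,1))`
(a fat Cantor set). -/
theorem statement_3 (L : Set ℝ) (a b : ℕ → ℝ) (lam : Measure ℝ) [IsFiniteMeasure lam]
    (hL : L ⊆ Ioo (0:ℝ) 1)
    (hclosed : ∃ C : Set ℝ, IsClosed C ∧ L = C ∩ Ioo (0:ℝ) 1)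
    (hint : interior L = ∅)
    (hnull : volume L = 0)
    (hab : ∀ n, a n < b n)
    (hcompl : Ioo (0:ℝ) 1 \ L = ⋃ n, Ioo (a n) (b n))
    (hdisj : Pairwise (Function.onFun Disjoint fun n => Ioo (a n) (b n)))
    (hconc : lam Lᶜ = 0)
    (hatomless : ∀ x : ℝ, lam {x} = 0)
    (f : ℝ → ℝ) (hf : ∀ x, f x = (lam (Ioo 0 x)).toReal)
    (M : ℝ) (hM : M = (lam (Ioo (0:ℝ) 1)).toReal)
    (Lhat : Set ℝ)
    (hLhat : Lhat = Ioo (0:ℝ) (1 + M) \ ⋃ n, Ioo (a n + f (a n)) (b n + f (a n))) :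
    (∃ C : Set ℝ, IsClosed C ∧ Lhat = C ∩ Ioo (0:ℝ) (1 + M)) ∧
    interior Lhat = ∅ ∧
    volume Lhat = ENNReal.ofReal M :=
  statement_3_general L a b lam hint hnull hcompl hdisj hconc hatomless f hf M hM Lhat hLhat
end

section
/- With L, λ, f, κ as in the one-dimensional grafting construction, the composition D = f ∘ κ : (0, 1+|λ|) → (0, |λ|) is constant on each interval (aₙ + f(aₙ), bₙ + f(aₙ)), is surjective when restricted to the fat Cantor set Ĺ, and pushes forward the Lebesgue measure restricted to Ĺ to the Lebesgue measure on (0,|λ|). -/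
open MeasureTheory Set

/-!
The function `f` is continuous (as `λ` has no atoms), nondecreasing, and constant on every gap
`(aₙ, bₙ)`, so `g x = x + f x` is strictly increasing and maps `(aₙ, bₙ)` onto
`(aₙ + f aₙ, bₙ + f aₙ)` by a translation. Hence `f ∘ κ` is constant on each image, and for `c ∈ [0, 1]`
the part of `Ĺ` below `g c` has measure `(c + f c) - c = f c`: the gaps fill `(0, c)` up to the
null set `L`, and `g` moves each of them rigidly. If `c` is the first point where `f` reaches the
level `v`, then `f ∘ κ < v` on `Ĺ` exactly below `g c`, which gives both the surjectivity and the
distribution of `f ∘ κ`.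
-/

section MeasureIoo

variable (μ : Measure ℝ)

theorem monotone_measureReal_Ioo_zero [IsFiniteMeasure μ] : Monotone fun x => μ.real (Ioo 0 x) :=
  fun _ _ hxy => measureReal_mono (Ioo_subset_Ioo_right hxy)

theorem measureReal_Ioo_zero_eq_zero_of_nonpos {x : ℝ} (hx : x ≤ 0) : μ.real (Ioo 0 x) = 0 := by
  simp [Ioo_eq_empty_of_le hx]

theorem continuous_measureReal_Ioo_zero [IsFiniteMeasure μ] [NullSingletonClass μ] :
    Continuous fun x => μ.real (Ioo 0 x) := by
  refine ((integrable_const (1 : ℝ)).continuous_primitive (μ := μ) 0).comp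
    (continuous_id.max (continuous_const (y := (0 : ℝ)))) |>.congr fun x => ?_
  rcases le_total x 0 with hx | hx
  · simp [max_eq_right hx, measureReal_Ioo_zero_eq_zero_of_nonpos μ hx]
  · simp [max_eq_left hx, intervalIntegral.integral_const', measureReal_def,
      measure_congr (Ioo_ae_eq_Ioc (μ := μ)), Ioc_eq_empty_of_le hx]

theorem measureReal_Ioo_zero_eq_of_measure_Ioo_eq_zero [IsFiniteMeasure μ] [NullSingletonClass μ]
    {a b t : ℝ} (hab : μ (Ioo a b) = 0) (ht : t ∈ Ioo a b) :
    μ.real (Ioo 0 t) = μ.real (Ioo 0 a) := by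
  refine le_antisymm ?_ (monotone_measureReal_Ioo_zero μ ht.1.le)
  have hnull : μ (Icc a t) = 0 := by
    rw [← measure_congr (Ioo_ae_eq_Icc (μ := μ))]
    exact measure_mono_null (Ioo_subset_Ioo_right ht.2.le) hab
  calc μ.real (Ioo 0 t) ≤ μ.real (Ioo 0 a ∪ Icc a t) := by
        refine measureReal_mono fun x hx => ?_
        rcases lt_or_ge x a with h | h
        exacts [Or.inl ⟨hx.1, h⟩, Or.inr ⟨h, hx.2.le⟩]
    _ ≤ μ.real (Ioo 0 a) + μ.real (Icc a t) := measureReal_union_le _ _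
    _ = μ.real (Ioo 0 a) := by
      rw [measureReal_def _ (Icc a t), hnull, ENNReal.toReal_zero, add_zero]

end MeasureIoo

section Grafting

variable {f κ : ℝ → ℝ}

theorem image_add_self_Ioo {a b : ℝ} (hconst : ∀ t ∈ Ioo a b, f t = f a) :
    (fun x => x + f x) '' Ioo a b = Ioo (a + f a) (b + f a) := by
  rw [← image_add_const_Ioo]
  exact image_congr fun t ht => by rw [hconst t ht]

theorem volume_image_add_self {a b : ℕ → ℝ} (hf : Monotone f)
    (hconst : ∀ n, ∀ t ∈ Ioo (a n) (b n), f t = f (a n))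
    (hdisj : Pairwise (Function.onFun Disjoint fun n => Ioo (a n) (b n)))
    {S : Set ℝ} (hS : MeasurableSet S) (hSI : S ⊆ ⋃ n, Ioo (a n) (b n)) :
    volume ((fun x => x + f x) '' S) = volume S := by
  set g : ℝ → ℝ := fun x => x + f x
  have hg : StrictMono g := strictMono_id.add_monotone hf
  have hpiece : ∀ n, g '' (S ∩ Ioo (a n) (b n)) =
      (fun x => x + -f (a n)) ⁻¹' (S ∩ Ioo (a n) (b n)) := fun n => by
    rw [← image_add_right]
    exact image_congr fun t ht => by simp only [g, hconst n t ht.2]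
  have hdisjS : Pairwise (Function.onFun Disjoint fun n => S ∩ Ioo (a n) (b n)) :=
    fun n m hnm => (hdisj hnm).mono inter_subset_right inter_subset_right
  have hmeasS : ∀ n, MeasurableSet (S ∩ Ioo (a n) (b n)) := fun n => hS.inter measurableSet_Ioo
  rw [← inter_eq_left.2 hSI, inter_iUnion, image_iUnion,
    measure_iUnion (fun n m hnm => (hdisjS hnm).image hg.injective.injOn (subset_univ _)
      (subset_univ _)) (fun n => hpiece n ▸ (hmeasS n).preimage (measurable_add_const _)),
    measure_iUnion hdisjS hmeasS]
  exact tsum_congr fun n => by rw [hpiece, measure_preimage_add_right]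

theorem volume_Ioo_add_self_diff_iUnion {a b : ℕ → ℝ} (hf : Monotone f) (hf0 : f 0 = 0)
    (hconst : ∀ n, ∀ t ∈ Ioo (a n) (b n), f t = f (a n))
    (hdisj : Pairwise (Function.onFun Disjoint fun n => Ioo (a n) (b n)))
    (hfull : volume (Ioo 0 1 \ ⋃ n, Ioo (a n) (b n)) = 0) {c : ℝ} (hc : c ∈ Icc (0 : ℝ) 1) :
    volume (Ioo 0 (c + f c) \ ⋃ n, Ioo (a n + f (a n)) (b n + f (a n))) =
      ENNReal.ofReal (f c) := by
  set g : ℝ → ℝ := fun x => x + f x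
  set U := ⋃ n, Ioo (a n) (b n)
  have hg : StrictMono g := strictMono_id.add_monotone hf
  have hg0 : g 0 = 0 := by simp [g, hf0]
  have hJ : ⋃ n, Ioo (a n + f (a n)) (b n + f (a n)) = g '' U := by
    rw [image_iUnion]
    exact iUnion_congr fun n => (image_add_self_Ioo (hconst n)).symm
  have hU : MeasurableSet U := MeasurableSet.iUnion fun n => measurableSet_Ioo
  have hpre : g ⁻¹' Ioo (g 0) (g c) = Ioo 0 c := by
    ext t
    simp only [mem_preimage, mem_Ioo, hg.lt_iff_lt]
  have hinter : volume (Ioo 0 (g c) ∩ g '' U) = ENNReal.ofReal c := by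
    rw [inter_comm, ← hg0, ← image_inter_preimage, hpre,
      volume_image_add_self hf hconst hdisj (hU.inter measurableSet_Ioo) inter_subset_left,
      inter_comm, measure_inter_conull'
        (measure_mono_null (sdiff_subset_sdiff_left (Ioo_subset_Ioo_right hc.2)) hfull),
      Real.volume_Ioo, sub_zero]
  have hsplit := measure_inter_add_sdiff (μ := volume) (Ioo 0 (g c))
    (hJ ▸ MeasurableSet.iUnion fun n => measurableSet_Ioo)
  rw [hinter, Real.volume_Ioo, sub_zero,
    ENNReal.ofReal_add hc.1 (hf0 ▸ hf hc.1 : 0 ≤ f c)] at hsplit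
  rw [hJ]
  exact (ENNReal.add_right_inj ENNReal.ofReal_ne_top).1 hsplit

theorem exists_eq_and_lt_iff_lt (hf : Monotone f) (hfc : Continuous f) {p q v : ℝ} (hpq : p ≤ q)
    (hv : v ∈ Ioc (f p) (f q)) : ∃ c ∈ Ioc p q, f c = v ∧ ∀ t, f t < v ↔ t < c := by
  set S := Icc p q ∩ {t | f t = v}
  have hS : S.Nonempty := intermediate_value_Icc hpq hfc.continuousOn (Ioc_subset_Icc_self hv)
  have hcS : sInf S ∈ S :=
    (isClosed_Icc.inter (isClosed_eq hfc continuous_const)).csInf_mem hS ⟨p, fun t ht => ht.1.1⟩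
  obtain ⟨⟨hpc, hcq⟩, hfc⟩ := hcS
  have hpc' : p < sInf S := hpc.lt_of_ne fun h => hv.1.ne (by rw [h]; exact hfc)
  refine ⟨sInf S, ⟨hpc', hcq⟩, hfc, fun t => ⟨fun ht => ?_, fun ht => ?_⟩⟩
  · by_contra! h
    exact ht.not_ge (hfc ▸ hf h)
  · refine (hfc ▸ hf ht.le).lt_of_ne fun hft => ?_
    rcases lt_or_ge t p with htp | htp
    · exact hv.1.not_ge (hft ▸ hf htp.le)
    · exact ht.not_ge (csInf_le ⟨p, fun s hs => hs.1.1⟩ ⟨⟨htp, ht.le.trans hcq⟩, hft⟩)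

theorem exists_Iio_inter_Ioo_eq (hf : Monotone f) (hfc : Continuous f) (hf0 : f 0 = 0) (v : ℝ) :
    ∃ c ∈ Icc (0 : ℝ) 1, (∀ t ∈ Ioo (0 : ℝ) 1, f t < v ↔ t < c) ∧
      Iio v ∩ Ioo 0 (f 1) = Ioo 0 (f c) := by
  rcases le_or_gt v 0 with hv0 | hv0
  · have hfv : ∀ t, 0 ≤ t → v ≤ f t := fun t ht => hv0.trans (hf0 ▸ hf ht)
    refine ⟨0, left_mem_Icc.2 zero_le_one, fun t ht => iff_of_false (hfv t ht.1.le).not_gt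
      ht.1.not_gt, ?_⟩
    rw [Iio_inter_Ioo, hf0, Ioo_self, Ioo_eq_empty ((min_le_left _ _).trans hv0).not_gt]
  rcases le_or_gt v (f 1) with hv1 | hv1
  · obtain ⟨c, hc, hfc, hiff⟩ :=
      exists_eq_and_lt_iff_lt hf hfc zero_le_one ⟨hf0.symm ▸ hv0, hv1⟩
    refine ⟨c, Ioc_subset_Icc_self hc, fun t _ => hiff t, ?_⟩
    rw [Iio_inter_Ioo, min_eq_left hv1, hfc]
  · refine ⟨1, right_mem_Icc.2 zero_le_one,
      fun t ht => iff_of_true ((hf ht.2.le).trans_lt hv1) ht.2, ?_⟩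
    rw [Iio_inter_Ioo, min_eq_right hv1.le]

theorem apply_leftInvOn_eq_of_mem_Ioo_add {a b x : ℝ} (hconst : ∀ t ∈ Ioo a b, f t = f a)
    (hab : Ioo a b ⊆ Ioo 0 1) (hκ : LeftInvOn κ (fun x => x + f x) (Ioo 0 1))
    (hx : x ∈ Ioo (a + f a) (b + f a)) : f (κ x) = f a := by
  rw [← image_add_self_Ioo hconst] at hx
  obtain ⟨t, ht, rfl⟩ := hx
  rw [hκ (hab ht), hconst t ht]

theorem surjOn_apply_leftInvOn {a b : ℕ → ℝ} (hf : Monotone f) (hfc : Continuous f) (hf0 : f 0 = 0)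
    (hconst : ∀ n, ∀ t ∈ Ioo (a n) (b n), f t = f (a n))
    (hκ : LeftInvOn κ (fun x => x + f x) (Ioo 0 1)) :
    SurjOn (fun x => f (κ x)) (Ioo 0 (1 + f 1) \ ⋃ n, Ioo (a n + f (a n)) (b n + f (a n)))
      (Ioo 0 (f 1)) := by
  set g : ℝ → ℝ := fun x => x + f x
  have hg : StrictMono g := strictMono_id.add_monotone hf
  intro v hv
  obtain ⟨c, hc, hfc, hiff⟩ :=
    exists_eq_and_lt_iff_lt hf hfc zero_le_one ⟨hf0.symm ▸ hv.1, hv.2.le⟩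
  have hc1 : c < 1 := hc.2.lt_of_ne fun h => hv.2.ne (h ▸ hfc).symm
  refine ⟨g c, ⟨⟨?_, hg hc1⟩, fun hmem => ?_⟩, ?_⟩
  · simpa [g, hf0] using hg hc.1
  · obtain ⟨n, hn⟩ := mem_iUnion.1 hmem
    rw [← image_add_self_Ioo (hconst n)] at hn
    obtain ⟨t, ht, htc⟩ := hn
    obtain rfl := hg.injective htc
    exact ((hiff _).2 ht.1).ne (hconst n t ht ▸ hfc)
  · simp only [hκ ⟨hc.1, hc1⟩, hfc]

theorem map_apply_rightInvOn_volume_restrict {a b : ℕ → ℝ} (hf : Monotone f) (hfc : Continuous f)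
    (hf0 : f 0 = 0)
    (hconst : ∀ n, ∀ t ∈ Ioo (a n) (b n), f t = f (a n))
    (hdisj : Pairwise (Function.onFun Disjoint fun n => Ioo (a n) (b n)))
    (hfull : volume (Ioo 0 1 \ ⋃ n, Ioo (a n) (b n)) = 0)
    (hκ : RightInvOn κ (fun x => x + f x) (Ioo 0 (1 + f 1))) :
    Measure.map (fun x => f (κ x))
        (volume.restrict (Ioo 0 (1 + f 1) \ ⋃ n, Ioo (a n + f (a n)) (b n + f (a n)))) =
      volume.restrict (Ioo 0 (f 1)) := by
  set g : ℝ → ℝ := fun x => x + f x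
  set J := ⋃ n, Ioo (a n + f (a n)) (b n + f (a n))
  have hg : StrictMono g := strictMono_id.add_monotone hf
  have hg0 : g 0 = 0 := by simp [g, hf0]
  have hκmem : ∀ y ∈ Ioo 0 (1 + f 1), κ y ∈ Ioo 0 1 := fun y hy =>
    ⟨hg.lt_iff_lt.1 (by rw [hκ hy, hg0]; exact hy.1), hg.lt_iff_lt.1 ((hκ hy).trans_lt hy.2)⟩
  have hκmono : MonotoneOn κ (Ioo 0 (1 + f 1)) := fun x hx y hy hxy =>
    hg.le_iff_le.1 ((hκ hx).trans_le (hxy.trans_eq (hκ hy).symm))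
  have hmeas : MeasurableSet (Ioo 0 (1 + f 1) \ J) :=
    measurableSet_Ioo.diff (MeasurableSet.iUnion fun n => measurableSet_Ioo)
  have hae : AEMeasurable (fun x => f (κ x)) (volume.restrict (Ioo 0 (1 + f 1) \ J)) :=
    hfc.measurable.comp_aemeasurable
      ((aemeasurable_restrict_of_monotoneOn measurableSet_Ioo hκmono).mono_set sdiff_subset)
  have hlevel : ∀ v, ∀ c ∈ Icc (0 : ℝ) 1, (∀ t ∈ Ioo (0 : ℝ) 1, f t < v ↔ t < c) →
      (fun x => f (κ x)) ⁻¹' Iio v ∩ (Ioo 0 (1 + f 1) \ J) = Ioo 0 (g c) \ J := by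
    intro v c hc hiff
    ext y
    simp only [mem_inter_iff, mem_preimage, mem_Iio, mem_sdiff]
    constructor
    · rintro ⟨hlt, hy, hyJ⟩
      exact ⟨⟨hy.1, (hκ hy).symm.trans_lt (hg ((hiff _ (hκmem y hy)).1 hlt))⟩, hyJ⟩
    · rintro ⟨hy, hyJ⟩
      have hy' : y ∈ Ioo 0 (1 + f 1) := ⟨hy.1, hy.2.trans_le (hg.monotone hc.2)⟩
      exact ⟨(hiff _ (hκmem y hy')).2 (hg.lt_iff_lt.1 ((hκ hy').trans_lt hy.2)), hy', hyJ⟩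
  refine (ext_of_generate_finite (range Iio) (BorelSpace.measurable_eq.trans
    (borel_eq_generateFrom_Iio ℝ)) isPiSystem_Iio ?_ ?_).symm
  · rintro _ ⟨v, rfl⟩
    obtain ⟨c, hc, hiff, hIio⟩ := exists_Iio_inter_Ioo_eq hf hfc hf0 v
    rw [Measure.map_apply_of_aemeasurable hae measurableSet_Iio, Measure.restrict_apply' hmeas,
      Measure.restrict_apply' measurableSet_Ioo, hIio, hlevel v c hc hiff, Real.volume_Ioo,
      sub_zero]
    exact (volume_Ioo_add_self_diff_iUnion hf hf0 hconst hdisj hfull hc).symm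
  · rw [Measure.map_apply_of_aemeasurable hae MeasurableSet.univ, preimage_univ,
      Measure.restrict_apply_univ, Measure.restrict_apply_univ, Real.volume_Ioo, sub_zero]
    exact (volume_Ioo_add_self_diff_iUnion hf hf0 hconst hdisj hfull
      (right_mem_Icc.2 zero_le_one)).symm

end Grafting

theorem statement_5_general (L : Set ℝ) (a b : ℕ → ℝ) (lam : Measure ℝ) [IsFiniteMeasure lam]
    (hnull : volume L = 0)
    (hcompl : Ioo (0:ℝ) 1 \ L = ⋃ n, Ioo (a n) (b n))
    (hdisj : Pairwise (Function.onFun Disjoint fun n => Ioo (a n) (b n)))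
    (hconc : lam Lᶜ = 0)
    (hatomless : ∀ x : ℝ, lam {x} = 0)
    (f : ℝ → ℝ) (hf : ∀ x, f x = (lam (Ioo 0 x)).toReal)
    (M : ℝ) (hM : M = (lam (Ioo (0:ℝ) 1)).toReal)
    (κ : ℝ → ℝ)
    (hκ : Set.InvOn κ (fun x => x + f x) (Ioo (0:ℝ) 1) (Ioo (0:ℝ) (1 + M)))
    (Lhat : Set ℝ)
    (hLhat : Lhat = Ioo (0:ℝ) (1 + M) \ ⋃ n, Ioo (a n + f (a n)) (b n + f (a n))) :
    (∀ n, ∀ x ∈ Ioo (a n + f (a n)) (b n + f (a n)),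
        ∀ y ∈ Ioo (a n + f (a n)) (b n + f (a n)), f (κ x) = f (κ y)) ∧
    Set.SurjOn (fun x => f (κ x)) Lhat (Ioo (0:ℝ) M) ∧
    Measure.map (fun x => f (κ x)) (volume.restrict Lhat) = volume.restrict (Ioo (0:ℝ) M) := by
  have : NullSingletonClass lam := ⟨hatomless⟩
  have hf_eq : f = fun x => lam.real (Ioo 0 x) := funext hf
  have hmono : Monotone f := hf_eq ▸ monotone_measureReal_Ioo_zero lam
  have hcont : Continuous f := hf_eq ▸ continuous_measureReal_Ioo_zero lam
  have hf0 : f 0 = 0 := hf_eq ▸ measureReal_Ioo_zero_eq_zero_of_nonpos lam le_rfl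
  have hgaps : ∀ n, Ioo (a n) (b n) ⊆ Ioo 0 1 \ L :=
    fun n => hcompl ▸ subset_iUnion (fun n => Ioo (a n) (b n)) n
  have hconst : ∀ n, ∀ t ∈ Ioo (a n) (b n), f t = f (a n) := fun n t ht =>
    hf_eq ▸ measureReal_Ioo_zero_eq_of_measure_Ioo_eq_zero lam
      (measure_mono_null (fun x hx => (hgaps n hx).2) hconc) ht
  have hfull : volume (Ioo 0 1 \ ⋃ n, Ioo (a n) (b n)) = 0 := by
    rw [← hcompl, Set.sdiff_sdiff_right_self]
    exact measure_mono_null inter_subset_right hnull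
  obtain rfl : M = f 1 := hM.trans (hf 1).symm
  subst hLhat
  refine ⟨fun n x hx y hy => ?_, surjOn_apply_leftInvOn hmono hcont hf0 hconst hκ.1,
    map_apply_rightInvOn_volume_restrict hmono hcont hf0 hconst hdisj hfull hκ.2⟩
  have hgap01 : Ioo (a n) (b n) ⊆ Ioo 0 1 := (hgaps n).trans sdiff_subset
  rw [apply_leftInvOn_eq_of_mem_Ioo_add (hconst n) hgap01 hκ.1 hx,
    apply_leftInvOn_eq_of_mem_Ioo_add (hconst n) hgap01 hκ.1 hy]

/-- One-dimensional grafting: the composition `D = f ∘ κ : (0,1+|λ|) → (0,|λ|)` is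
constant on each interval `(aₙ + f(aₙ), bₙ + f(aₙ))`, surjective from the fat Cantor
set `Ĺ` onto `(0,|λ|)`, and pushes forward the Lebesgue measure restricted to `Ĺ` to
the Lebesgue measure on `(0,|λ|)`. -/
theorem statement_5 (L : Set ℝ) (a b : ℕ → ℝ) (lam : Measure ℝ) [IsFiniteMeasure lam]
    (hL : L ⊆ Ioo (0:ℝ) 1)
    (hclosed : ∃ C : Set ℝ, IsClosed C ∧ L = C ∩ Ioo (0:ℝ) 1)
    (hint : interior L = ∅)
    (hnull : volume L = 0)
    (hab : ∀ n, a n < b n)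
    (hcompl : Ioo (0:ℝ) 1 \ L = ⋃ n, Ioo (a n) (b n))
    (hdisj : Pairwise (Function.onFun Disjoint fun n => Ioo (a n) (b n)))
    (hconc : lam Lᶜ = 0)
    (hatomless : ∀ x : ℝ, lam {x} = 0)
    (f : ℝ → ℝ) (hf : ∀ x, f x = (lam (Ioo 0 x)).toReal)
    (M : ℝ) (hM : M = (lam (Ioo (0:ℝ) 1)).toReal)
    (κ : ℝ → ℝ)
    (hκ : Set.InvOn κ (fun x => x + f x) (Ioo (0:ℝ) 1) (Ioo (0:ℝ) (1 + M)))
    (Lhat : Set ℝ)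
    (hLhat : Lhat = Ioo (0:ℝ) (1 + M) \ ⋃ n, Ioo (a n + f (a n)) (b n + f (a n))) :
    (∀ n, ∀ x ∈ Ioo (a n + f (a n)) (b n + f (a n)),
        ∀ y ∈ Ioo (a n + f (a n)) (b n + f (a n)), f (κ x) = f (κ y)) ∧
    Set.SurjOn (fun x => f (κ x)) Lhat (Ioo (0:ℝ) M) ∧
    Measure.map (fun x => f (κ x)) (volume.restrict Lhat) = volume.restrict (Ioo (0:ℝ) M) :=
  statement_5_general L a b lam hnull hcompl hdisj hconc hatomless f hf M hM κ hκ Lhat hLhat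
end

section
/- In the upper half-plane model of the hyperbolic plane, let r be a geodesic parametrized by arclength, and for each t let η_t be the geodesic through r(t) orthogonal to r. Let l be another geodesic disjoint from r and lying on one side of r, and let h(t) be the length of the segment of η_t between r and l. Then the hyperbolic area of the region U bounded by r, l, η_{t₀−δ} and η_{t₀+δ} satisfies Area(U) ≥ 2δ·h(t₀). -/
open MeasureTheory Set

/-! Pulled back by the area-expanding Fermi chart `φ`, `U` becomes the region under the graph of
`h` over `(t₀ - δ, t₀ + δ)`, so its area is at least `∫ h`. By convexity,
`h (t₀ - s) + h (t₀ + s) ≥ 2 h t₀`, and integrating this over `s ∈ (-δ, δ)` gives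
`∫ h ≥ 2 δ h t₀` (the left half of the Hermite–Hadamard inequality). -/

lemma ConvexOn.two_mul_le_add_reflect {h : ℝ → ℝ} {s : Set ℝ} (hconv : ConvexOn ℝ s h)
    {t₀ t : ℝ} (ht : t ∈ s) (ht' : 2 * t₀ - t ∈ s) : 2 * h t₀ ≤ h t + h (2 * t₀ - t) := by
  have hmid := hconv.2 ht ht' (by norm_num : (0 : ℝ) ≤ 1 / 2) (by norm_num : (0 : ℝ) ≤ 1 / 2)
    (by norm_num)
  rw [smul_eq_mul, smul_eq_mul, smul_eq_mul, smul_eq_mul,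
    show (1 / 2 : ℝ) * t + 1 / 2 * (2 * t₀ - t) = t₀ by ring] at hmid
  linarith

lemma ConvexOn.two_mul_mul_le_intervalIntegral {h : ℝ → ℝ} {t₀ δ : ℝ} (hδ : 0 ≤ δ)
    (hconv : ConvexOn ℝ (Icc (t₀ - δ) (t₀ + δ)) h)
    (hint : IntervalIntegrable h volume (t₀ - δ) (t₀ + δ)) :
    2 * δ * h t₀ ≤ ∫ t in (t₀ - δ)..(t₀ + δ), h t := by
  have hreflect : ∫ t in (t₀ - δ)..(t₀ + δ), h (2 * t₀ - t) = ∫ t in (t₀ - δ)..(t₀ + δ), h t := by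
    rw [intervalIntegral.integral_comp_sub_left h (2 * t₀)]
    ring_nf
  have hint' : IntervalIntegrable (fun t => h (2 * t₀ - t)) volume (t₀ - δ) (t₀ + δ) := by
    simpa [show 2 * t₀ - (t₀ + δ) = t₀ - δ by ring, show 2 * t₀ - (t₀ - δ) = t₀ + δ by ring,
      IntervalIntegrable.symm_iff] using hint.comp_sub_left (2 * t₀)
  have hmono : ∫ _ in (t₀ - δ)..(t₀ + δ), 2 * h t₀
      ≤ ∫ t in (t₀ - δ)..(t₀ + δ), (h t + h (2 * t₀ - t)) :=
    intervalIntegral.integral_mono_on (by linarith) intervalIntegrable_const (hint.add hint')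
      fun t ht => hconv.two_mul_le_add_reflect ht ⟨by linarith [ht.2], by linarith [ht.1]⟩
  rw [intervalIntegral.integral_const, intervalIntegral.integral_add hint hint', hreflect,
    smul_eq_mul] at hmono
  linarith

lemma volume_regionBetween_zero_Ioo {h : ℝ → ℝ} {a b : ℝ} (hab : a ≤ b)
    (hint : IntervalIntegrable h volume a b) (hnonneg : ∀ t ∈ Ioo a b, 0 ≤ h t) :
    volume (regionBetween (fun _ => 0) h (Ioo a b)) = ENNReal.ofReal (∫ t in a..b, h t) := by
  rw [Measure.volume_eq_prod, volume_regionBetween_eq_integral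
    (integrableOn_const measure_Ioo_lt_top.ne)
    ((intervalIntegrable_iff_integrableOn_Ioo_of_le hab).1 hint) measurableSet_Ioo hnonneg,
    intervalIntegral.integral_of_le hab, integral_Ioc_eq_integral_Ioo]
  simp

theorem statement_7_general [MeasurableSpace UpperHalfPlane]
    (μ : Measure UpperHalfPlane)
    (φ : ℝ × ℝ → UpperHalfPlane)
    (hφarea : ∀ T : Set (ℝ × ℝ), MeasurableSet T → volume T ≤ μ (φ '' T))
    (h : ℝ → ℝ) (hconv : ConvexOn ℝ Set.univ h) (hpos : ∀ t, 0 < h t)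
    (t₀ δ : ℝ) (hδ : 0 < δ)
    (U : Set UpperHalfPlane)
    (hU : U = φ '' {p : ℝ × ℝ | p.1 ∈ Ioo (t₀ - δ) (t₀ + δ) ∧ p.2 ∈ Ioo 0 (h p.1)}) :
    ENNReal.ofReal (2 * δ * h t₀) ≤ μ U := by
  have hcont : Continuous h := continuousOn_univ.1 (hconv.continuousOn isOpen_univ)
  have hint : IntervalIntegrable h volume (t₀ - δ) (t₀ + δ) := hcont.intervalIntegrable _ _
  have hregion : {p : ℝ × ℝ | p.1 ∈ Ioo (t₀ - δ) (t₀ + δ) ∧ p.2 ∈ Ioo 0 (h p.1)}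
      = regionBetween (fun _ => 0) h (Ioo (t₀ - δ) (t₀ + δ)) := by
    ext p
    simp [regionBetween, and_comm]
  rw [hU, hregion]
  calc ENNReal.ofReal (2 * δ * h t₀)
      ≤ ENNReal.ofReal (∫ t in (t₀ - δ)..(t₀ + δ), h t) := ENNReal.ofReal_le_ofReal
        ((hconv.subset (subset_univ _) (convex_Icc _ _)).two_mul_mul_le_intervalIntegral
          hδ.le hint)
    _ = volume (regionBetween (fun _ => 0) h (Ioo (t₀ - δ) (t₀ + δ))) :=
        (volume_regionBetween_zero_Ioo (by linarith) hint fun t _ => (hpos t).le).symm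
    _ ≤ μ (φ '' regionBetween (fun _ => 0) h (Ioo (t₀ - δ) (t₀ + δ))) :=
        hφarea _ (measurableSet_regionBetween measurable_const hcont.measurable measurableSet_Ioo)

/-- Hyperbolic trapezium area estimate in the upper half-plane model.  `r` is a geodesic
parametrized by arclength, `φ` are Fermi coordinates based on `r` (mapping each vertical
line `{x = t}` isometrically onto the geodesic `η_t` orthogonal to `r` at `r(t)`, and
expanding areas: the hyperbolic area measure `μ` of an image dominates the Euclidean
area).  `l` is a geodesic disjoint from `r` on one side of `r`, at distance `h(t)` from
`r` along `η_t`, where `h` is convex and positive.  Then the hyperbolic area of the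
region `U` bounded by `r`, `l`, `η_{t₀−δ}`, `η_{t₀+δ}` is at least `2δ·h(t₀)`. -/
theorem statement_7 [MeasurableSpace UpperHalfPlane] [BorelSpace UpperHalfPlane]
    (μ : Measure UpperHalfPlane)
    (r : ℝ → UpperHalfPlane) (hr : ∀ s t : ℝ, dist (r s) (r t) = |s - t|)
    (φ : ℝ × ℝ → UpperHalfPlane)
    (hφ0 : ∀ t : ℝ, φ (t, 0) = r t)
    (hφinj : Function.Injective φ)
    (hφvert : ∀ t s s' : ℝ, dist (φ (t, s)) (φ (t, s')) = |s - s'|)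
    (hφarea : ∀ T : Set (ℝ × ℝ), MeasurableSet T → volume T ≤ μ (φ '' T))
    (l : Set UpperHalfPlane) (hlr : Disjoint l (range r))
    (h : ℝ → ℝ) (hconv : ConvexOn ℝ Set.univ h) (hpos : ∀ t, 0 < h t)
    (hl : ∀ t : ℝ, φ (t, h t) ∈ l)
    (t₀ δ : ℝ) (hδ : 0 < δ)
    (U : Set UpperHalfPlane)
    (hU : U = φ '' {p : ℝ × ℝ | p.1 ∈ Ioo (t₀ - δ) (t₀ + δ) ∧ p.2 ∈ Ioo 0 (h p.1)}) :
    ENNReal.ofReal (2 * δ * h t₀) ≤ μ U :=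
  statement_7_general μ φ hφarea h hconv hpos t₀ δ hδ U hU
end

section
/- For every finite atomless Borel measure μ on [0,1] there exists a sequence of finitely supported (atomic) measures μₙ with μₙ → μ weakly and supp(μₙ) → supp(μ) in Hausdorff distance. -/
open MeasureTheory Set Filter Topology

/-- The (topological) support of a Borel measure on `ℝ`: the set of points all of whose
open neighbourhoods have positive measure. -/
def measSupport (μ : Measure ℝ) : Set ℝ :=
  {x : ℝ | ∀ U : Set ℝ, IsOpen U → x ∈ U → μ U ≠ 0}

namespace Stmt12

/-- The complement of the support is null. -/
lemma measSupport_compl_null (μ : Measure ℝ) : μ (measSupport μ)ᶜ = 0 := by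
  have hsub : (measSupport μ)ᶜ ⊆
      ⋃ p : {p : ℚ × ℚ // μ (Ioo (p.1:ℝ) p.2) = 0}, Ioo ((p.1.1 : ℝ)) (p.1.2 : ℝ) := by
    intro x hx
    simp only [measSupport, mem_compl_iff, mem_setOf_eq, not_forall] at hx
    obtain ⟨U, hU, hxU, hμU⟩ := hx
    rw [not_ne_iff] at hμU
    obtain ⟨ε, hε, hball⟩ := Metric.isOpen_iff.1 hU x hxU
    obtain ⟨q, hq1, hq2⟩ := exists_rat_btwn (show x - ε < x by linarith)
    obtain ⟨r, hr1, hr2⟩ := exists_rat_btwn (show x < x + ε by linarith)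
    have hIoo : Ioo (q:ℝ) (r:ℝ) ⊆ U := by
      intro y hy
      apply hball
      simp only [Metric.mem_ball, Real.dist_eq, abs_lt]
      constructor <;> linarith [hy.1, hy.2]
    exact mem_iUnion.2 ⟨⟨(q, r), measure_mono_null hIoo hμU⟩, ⟨hq2, hr1⟩⟩
  exact measure_mono_null hsub (measure_iUnion_null fun p => p.2)

lemma exists_supp_mem {μ : Measure ℝ} {s : Set ℝ} (hs : μ s ≠ 0) :
    (s ∩ measSupport μ).Nonempty := by
  rw [Set.nonempty_iff_ne_empty]
  intro h
  have : s ⊆ (measSupport μ)ᶜ := by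
    intro x hx
    by_contra hxc
    rw [notMem_compl_iff] at hxc
    exact (Set.eq_empty_iff_forall_notMem.1 h x) ⟨hx, hxc⟩
  exact hs (measure_mono_null this (measSupport_compl_null μ))

/-- The `k`-th piece of the subdivision of `[0,1)` into `m` pieces. -/
def pc (m k : ℕ) : Set ℝ := Ico ((k:ℝ)/m) (((k:ℝ)+1)/m)

lemma pc_subset {m k : ℕ} (hk : k < m) : pc m k ⊆ Icc (0:ℝ) 1 := by
  have hm : (0:ℝ) < m := by exact_mod_cast Nat.pos_of_ne_zero (by omega)
  have hk' : (k:ℝ) + 1 ≤ m := by exact_mod_cast hk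
  rintro x ⟨h1, h2⟩
  constructor
  · exact le_trans (by positivity) h1
  · have : ((k:ℝ)+1)/m ≤ 1 := by
      rw [div_le_one hm]; exact hk'
    linarith

lemma pc_disjoint {m : ℕ} {k l : ℕ} (h : k ≠ l) : Disjoint (pc m k) (pc m l) := by
  rw [pc, pc, Set.Ico_disjoint_Ico]
  rcases h.lt_or_gt with h' | h'
  · have : (k:ℝ) + 1 ≤ l := by exact_mod_cast h'
    refine le_trans (min_le_left _ _) ?_
    exact le_trans (by gcongr) (le_max_right _ _)
  · have : (l:ℝ) + 1 ≤ k := by exact_mod_cast h'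
    refine le_trans (min_le_right _ _) ?_
    exact le_trans (by gcongr) (le_max_left _ _)

lemma mem_pc_iff {m k : ℕ} (hm : 0 < m) {x : ℝ} :
    x ∈ pc m k ↔ (k:ℝ) ≤ m * x ∧ (m:ℝ) * x < k + 1 := by
  have hm' : (0:ℝ) < m := by exact_mod_cast hm
  constructor
  · rintro ⟨h1, h2⟩
    constructor
    · rw [div_le_iff₀ hm'] at h1; linarith [h1]
    · rw [lt_div_iff₀ hm'] at h2; linarith [h2]
  · rintro ⟨h1, h2⟩
    constructor
    · rw [div_le_iff₀ hm']; linarith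
    · rw [lt_div_iff₀ hm']; linarith

lemma floor_toNat_eq {m k : ℕ} (hm : 0 < m) {x : ℝ} (hx : x ∈ pc m k) :
    (⌊(m:ℝ) * x⌋).toNat = k := by
  rw [mem_pc_iff hm] at hx
  have : ⌊(m:ℝ) * x⌋ = (k : ℤ) := by
    rw [Int.floor_eq_iff]
    constructor
    · exact_mod_cast hx.1
    · push_cast; exact hx.2
  rw [this]; simp

lemma mem_pc_self {m : ℕ} (hm : 0 < m) {x : ℝ} (hx : x ∈ Ico (0:ℝ) 1) :
    (⌊(m:ℝ) * x⌋).toNat < m ∧ x ∈ pc m (⌊(m:ℝ) * x⌋).toNat := by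
  have hm' : (0:ℝ) < m := by exact_mod_cast hm
  have h0 : (0:ℝ) ≤ (m:ℝ) * x := mul_nonneg hm'.le hx.1
  have hfl0 : 0 ≤ ⌊(m:ℝ) * x⌋ := Int.floor_nonneg.2 h0
  have hlt : (m:ℝ) * x < m := by
    have := hx.2; nlinarith
  have hfl : (⌊(m:ℝ) * x⌋ : ℝ) ≤ (m:ℝ) * x := Int.floor_le _
  have hub : ⌊(m:ℝ) * x⌋ < (m:ℤ) := by
    rw [Int.floor_lt]; exact_mod_cast hlt
  constructor
  · omega
  · rw [mem_pc_iff hm]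
    have h1 : ((⌊(m:ℝ) * x⌋).toNat : ℝ) = ((⌊(m:ℝ) * x⌋ : ℤ) : ℝ) := by
      exact_mod_cast congrArg (fun z : ℤ => (z : ℝ)) (Int.toNat_of_nonneg hfl0)
    rw [h1]
    exact ⟨Int.floor_le _, Int.lt_floor_add_one _⟩

/-- The union of the pieces is `[0,1)`. -/
lemma pc_biUnion {m : ℕ} (hm : 0 < m) : (⋃ k ∈ Finset.range m, pc m k) = Ico (0:ℝ) 1 := by
  apply Set.Subset.antisymm
  · intro x hx
    simp only [mem_iUnion, Finset.mem_range] at hx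
    obtain ⟨k, hk, hxk⟩ := hx
    have hm' : (0:ℝ) < m := by exact_mod_cast hm
    have hk' : (k:ℝ) + 1 ≤ m := by exact_mod_cast hk
    refine ⟨(pc_subset hk hxk).1, ?_⟩
    have h1 : ((k:ℝ)+1)/m ≤ 1 := by rw [div_le_one hm']; exact hk'
    exact lt_of_lt_of_le hxk.2 h1
  · intro x hx
    obtain ⟨hk, hmem⟩ := mem_pc_self hm hx
    simp only [mem_iUnion, Finset.mem_range]
    exact ⟨_, hk, hmem⟩

open scoped Classical in
noncomputable def apt (μ : Measure ℝ) (m k : ℕ) : ℝ :=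
  if h : (pc m k ∩ measSupport μ).Nonempty then h.choose else (k:ℝ)/m

lemma apt_mem_pc (μ : Measure ℝ) {m : ℕ} (hm : 0 < m) (k : ℕ) : apt μ m k ∈ pc m k := by
  classical
  rw [apt]
  split_ifs with h
  · exact h.choose_spec.1
  · refine ⟨le_refl _, ?_⟩
    have hm' : (0:ℝ) < m := by exact_mod_cast hm
    rw [div_lt_div_iff_of_pos_right] <;> [linarith; exact hm']

lemma apt_mem_supp {μ : Measure ℝ} {m k : ℕ} (h : μ (pc m k) ≠ 0) :
    apt μ m k ∈ measSupport μ := by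
  classical
  rw [apt, dif_pos (exists_supp_mem h)]
  exact (exists_supp_mem h).choose_spec.2

lemma apt_inj (μ : Measure ℝ) {m : ℕ} (hm : 0 < m) {k l : ℕ} (h : apt μ m k = apt μ m l) :
    k = l := by
  by_contra hkl
  exact (pc_disjoint hkl).ne_of_mem (apt_mem_pc μ hm k) (apt_mem_pc μ hm l) h

/-- The approximating measure. -/
noncomputable def nu (μ : Measure ℝ) (n : ℕ) : Measure ℝ :=
  ∑ k ∈ Finset.range (n+1), μ (pc (n+1) k) • Measure.dirac (apt μ (n+1) k)

lemma nu_apply (μ : Measure ℝ) (n : ℕ) (s : Set ℝ) :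
    nu μ n s = ∑ k ∈ Finset.range (n+1), μ (pc (n+1) k) * Measure.dirac (apt μ (n+1) k) s := by
  rw [nu, Measure.finset_sum_apply]
  rfl

lemma nu_singleton (μ : Measure ℝ) {n k : ℕ} (hk : k < n+1) :
    nu μ n {apt μ (n+1) k} = μ (pc (n+1) k) := by
  rw [nu_apply]
  rw [Finset.sum_eq_single_of_mem k (Finset.mem_range.2 hk)]
  · rw [Measure.dirac_apply_of_mem (mem_singleton _), mul_one]
  · intro b _ hb
    rw [Measure.dirac_apply' _ (measurableSet_singleton _)]
    rw [Set.indicator_of_notMem, mul_zero]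
    intro hmem
    exact hb (apt_inj μ (Nat.succ_pos n) (mem_singleton_iff.1 hmem))

lemma mem_supp_nu {μ : Measure ℝ} {n k : ℕ} (hk : k < n+1) (h : μ (pc (n+1) k) ≠ 0) :
    apt μ (n+1) k ∈ measSupport (nu μ n) := by
  intro U hU hxU h0
  rw [nu_apply] at h0
  have := (Finset.sum_eq_zero_iff.1 h0) k (Finset.mem_range.2 hk)
  rw [Measure.dirac_apply_of_mem hxU, mul_one] at this
  exact h this

lemma supp_nu_subset {μ : Measure ℝ} {n : ℕ} :
    measSupport (nu μ n) ⊆ measSupport μ := by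
  intro x hx
  classical
  set T : Finset ℝ := (Finset.range (n+1)).filter (fun k => μ (pc (n+1) k) ≠ 0) |>.image (apt μ (n+1)) with hT
  by_cases hxT : x ∈ T
  · simp only [hT, Finset.mem_image, Finset.mem_filter, Finset.mem_range] at hxT
    obtain ⟨k, ⟨hk, hμk⟩, rfl⟩ := hxT
    exact apt_mem_supp hμk
  · exfalso
    apply hx ((↑T : Set ℝ))ᶜ (T.finite_toSet.isClosed.isOpen_compl) (by simpa using hxT)
    rw [nu_apply]
    apply Finset.sum_eq_zero
    intro k hk
    by_cases hμk : μ (pc (n+1) k) = 0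
    · rw [hμk, zero_mul]
    · rw [Measure.dirac_apply' _ (T.finite_toSet.isClosed.isOpen_compl.measurableSet)]
      rw [Set.indicator_of_notMem, mul_zero]
      simp only [mem_compl_iff, not_not, Finset.mem_coe]
      simp only [hT, Finset.mem_image, Finset.mem_filter]
      exact ⟨k, ⟨hk, hμk⟩, rfl⟩

lemma Ico_compl_null (μ : Measure ℝ) (hconc : μ (Set.Icc (0:ℝ) 1)ᶜ = 0)
    (hatomless : ∀ x : ℝ, μ {x} = 0) : μ (Ico (0:ℝ) 1)ᶜ = 0 := by
  have hsub : (Ico (0:ℝ) 1)ᶜ ⊆ (Icc (0:ℝ) 1)ᶜ ∪ {1} := by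
    intro x hx
    simp only [mem_compl_iff, mem_Ico, not_and_or, not_le, not_lt] at hx
    rcases hx with h | h
    · exact Or.inl (by simp [mem_Icc]; intro h'; linarith)
    · rcases eq_or_lt_of_le h with h' | h'
      · exact Or.inr (by simp [h'.symm])
      · exact Or.inl (by simp [mem_Icc]; intro h''; linarith)
  refine measure_mono_null hsub ?_
  exact measure_union_null hconc (hatomless 1)

lemma dist_le_of_mem_pc {m k : ℕ} (hk : k < m) {x y : ℝ} (hx : x ∈ pc m k) (hy : y ∈ pc m k) :
    dist x y ≤ 1/m := by
  have hm' : (0:ℝ) < m := by exact_mod_cast Nat.pos_of_ne_zero (by omega)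
  rw [Real.dist_eq, abs_le]
  have e : ((k:ℝ)+1)/m - (k:ℝ)/m = 1/m := by field_simp; ring
  constructor
  · have := hx.1; have := hy.2; rw [← e]; linarith [hx.1, hy.2]
  · rw [← e]; linarith [hy.1, hx.2]

lemma hdist_le (μ : Measure ℝ) (hconc : μ (Set.Icc (0:ℝ) 1)ᶜ = 0)
    (hatomless : ∀ x : ℝ, μ {x} = 0) (n : ℕ) :
    Metric.hausdorffDist (measSupport (nu μ n)) (measSupport μ) ≤ 2/(n+1) := by
  have hm : 0 < n + 1 := Nat.succ_pos n
  have hm' : (0:ℝ) < (n:ℝ) + 1 := by positivity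
  apply Metric.hausdorffDist_le_of_mem_dist (by positivity)
  · intro x hx
    exact ⟨x, supp_nu_subset hx, by simp; positivity⟩
  · intro x hx
    -- the ball around x has positive measure, intersect with some piece
    have hball : μ (Metric.ball x (1/((n:ℝ)+1))) ≠ 0 :=
      hx _ Metric.isOpen_ball (Metric.mem_ball_self (by positivity))
    have hball2 : μ (Metric.ball x (1/((n:ℝ)+1)) ∩ Ico (0:ℝ) 1) ≠ 0 := by
      intro h0
      apply hball
      have : Metric.ball x (1/((n:ℝ)+1)) ⊆
          (Metric.ball x (1/((n:ℝ)+1)) ∩ Ico (0:ℝ) 1) ∪ (Ico (0:ℝ) 1)ᶜ := by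
        intro y hy
        by_cases hy' : y ∈ Ico (0:ℝ) 1
        · exact Or.inl ⟨hy, hy'⟩
        · exact Or.inr hy'
      exact measure_mono_null this
        (measure_union_null h0 (Ico_compl_null μ hconc hatomless))
    rw [← pc_biUnion hm] at hball2
    rw [Set.inter_iUnion₂] at hball2
    have : ∃ k ∈ Finset.range (n+1), μ (Metric.ball x (1/((n:ℝ)+1)) ∩ pc (n+1) k) ≠ 0 := by
      by_contra hc
      push_neg at hc
      apply hball2
      apply measure_biUnion_null_iff (Finset.countable_toSet _) |>.2
      exact fun k hk => hc k hk
    obtain ⟨k, hk, hμk⟩ := this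
    have hμpc : μ (pc (n+1) k) ≠ 0 :=
      fun h => hμk (measure_mono_null Set.inter_subset_right h)
    have hne : (Metric.ball x (1/((n:ℝ)+1)) ∩ pc (n+1) k).Nonempty := by
      rw [Set.nonempty_iff_ne_empty]
      intro h
      exact hμk (by rw [h]; exact measure_empty)
    obtain ⟨y, hyB, hypc⟩ := hne
    refine ⟨apt μ (n+1) k, mem_supp_nu (Finset.mem_range.1 hk) hμpc, ?_⟩
    have h1 : dist x y ≤ 1/((n:ℝ)+1) := le_of_lt (Metric.mem_ball'.1 hyB)
    have h2 : dist y (apt μ (n+1) k) ≤ 1/((n:ℝ)+1) := by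
      have := dist_le_of_mem_pc (Finset.mem_range.1 hk) hypc (apt_mem_pc μ hm k)
      simpa using this
    calc dist x (apt μ (n+1) k) ≤ dist x y + dist y (apt μ (n+1) k) := dist_triangle _ _ _
      _ ≤ 1/((n:ℝ)+1) + 1/((n:ℝ)+1) := add_le_add h1 h2
      _ = 2/((n:ℝ)+1) := by ring

noncomputable def rfn (μ : Measure ℝ) (m : ℕ) (x : ℝ) : ℝ := apt μ m (⌊(m:ℝ)*x⌋).toNat

lemma rfn_measurable (μ : Measure ℝ) (m : ℕ) : Measurable (rfn μ m) :=
  (measurable_of_countable (fun z : ℤ => apt μ m z.toNat)).comp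
    (Int.measurable_floor.comp (measurable_id.const_mul (m:ℝ)))

lemma rfn_eq_on_pc {μ : Measure ℝ} {m k : ℕ} (hm : 0 < m) {x : ℝ} (hx : x ∈ pc m k) :
    rfn μ m x = apt μ m k := by
  rw [rfn, floor_toNat_eq hm hx]

lemma g_integrable (μ : Measure ℝ) [IsFiniteMeasure μ] (f : BoundedContinuousFunction ℝ ℝ)
    (m : ℕ) : Integrable (fun x => f (rfn μ m x)) μ := by
  refine Integrable.mono' (integrable_const ‖f‖)
    ((f.continuous.measurable.comp (rfn_measurable μ m)).aestronglyMeasurable) ?_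
  exact ae_of_all _ fun x => f.norm_coe_le_norm _

lemma integral_nu (μ : Measure ℝ) [IsFiniteMeasure μ] (hconc : μ (Set.Icc (0:ℝ) 1)ᶜ = 0)
    (hatomless : ∀ x : ℝ, μ {x} = 0) (f : BoundedContinuousFunction ℝ ℝ) (n : ℕ) :
    ∫ x, f x ∂(nu μ n) = ∫ x, f (rfn μ (n+1) x) ∂μ := by
  have hm : 0 < n + 1 := Nat.succ_pos n
  have hLHS : ∫ x, f x ∂(nu μ n)
      = ∑ k ∈ Finset.range (n+1), (μ (pc (n+1) k)).toReal • f (apt μ (n+1) k) := by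
    rw [nu, integral_finset_sum_measure]
    · refine Finset.sum_congr rfl fun k _ => ?_
      rw [integral_smul_measure, integral_dirac]
    · intro k _
      exact (BoundedContinuousFunction.integrable (Measure.dirac _) f).smul_measure
        (measure_ne_top μ _)
  have hae : ∀ᵐ x ∂μ, x ∈ Ico (0:ℝ) 1 := by
    rw [ae_iff]
    exact Ico_compl_null μ hconc hatomless
  have hres : μ.restrict (Ico (0:ℝ) 1) = μ := Measure.restrict_eq_self_of_ae_mem hae
  have hRHS : ∫ x, f (rfn μ (n+1) x) ∂μ
      = ∑ k ∈ Finset.range (n+1), (μ (pc (n+1) k)).toReal • f (apt μ (n+1) k) := by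
    rw [show (∫ x, f (rfn μ (n+1) x) ∂μ) = ∫ x in Ico (0:ℝ) 1, f (rfn μ (n+1) x) ∂μ from
      by rw [hres]]
    have : ∫ x in Ico (0:ℝ) 1, f (rfn μ (n+1) x) ∂μ
        = ∫ x in ⋃ k ∈ Finset.range (n+1), pc (n+1) k, f (rfn μ (n+1) x) ∂μ := by
      rw [pc_biUnion hm]
    rw [this, integral_biUnion_finset]
    · refine Finset.sum_congr rfl fun k _ => ?_
      calc ∫ x in pc (n+1) k, f (rfn μ (n+1) x) ∂μ
          = ∫ _x in pc (n+1) k, f (apt μ (n+1) k) ∂μ :=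
            setIntegral_congr_fun measurableSet_Ico
              (fun x hx => by rw [rfn_eq_on_pc hm hx])
        _ = (μ (pc (n+1) k)).toReal • f (apt μ (n+1) k) := setIntegral_const _
    · exact fun k _ => measurableSet_Ico
    · exact fun k _ l _ hkl => pc_disjoint hkl
    · exact fun k _ => (g_integrable μ f (n+1)).integrableOn
  rw [hLHS, hRHS]

lemma tendsto_integral_nu (μ : Measure ℝ) [IsFiniteMeasure μ]
    (hconc : μ (Set.Icc (0:ℝ) 1)ᶜ = 0) (hatomless : ∀ x : ℝ, μ {x} = 0)
    (f : BoundedContinuousFunction ℝ ℝ) :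
    Tendsto (fun n => ∫ x, f x ∂(nu μ n)) atTop (𝓝 (∫ x, f x ∂μ)) := by
  have hae : ∀ᵐ x ∂μ, x ∈ Ico (0:ℝ) 1 := by
    rw [ae_iff]
    exact Ico_compl_null μ hconc hatomless
  have key : Tendsto (fun n => ∫ x, f (rfn μ (n+1) x) ∂μ) atTop (𝓝 (∫ x, f x ∂μ)) := by
    apply tendsto_integral_of_dominated_convergence (fun _ => ‖f‖)
    · exact fun n =>
        ((f.continuous.measurable.comp (rfn_measurable μ (n+1))).aestronglyMeasurable)
    · exact integrable_const _
    · exact fun n => ae_of_all _ fun x => f.norm_coe_le_norm _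
    · filter_upwards [hae] with x hx
      have hr : Tendsto (fun n : ℕ => rfn μ (n+1) x) atTop (𝓝 x) := by
        rw [tendsto_iff_dist_tendsto_zero]
        apply squeeze_zero (fun n => dist_nonneg) (g := fun n : ℕ => 1/((n:ℝ)+1))
        · intro n
          obtain ⟨hk, hmem⟩ := mem_pc_self (Nat.succ_pos n) hx
          have h1 : rfn μ (n+1) x ∈ pc (n+1) ((⌊((n+1:ℕ):ℝ) * x⌋).toNat) := by
            rw [rfn_eq_on_pc (Nat.succ_pos n) hmem]
            exact apt_mem_pc μ (Nat.succ_pos n) _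
          have := dist_le_of_mem_pc hk h1 hmem
          simpa using this
        · exact tendsto_one_div_add_atTop_nhds_zero_nat
      exact ((f.continuous.tendsto x).comp hr)
  have heq : (fun n => ∫ x, f x ∂(nu μ n)) = fun n => ∫ x, f (rfn μ (n+1) x) ∂μ :=
    funext fun n => integral_nu μ hconc hatomless f n
  rw [heq]
  exact key

end Stmt12

open Stmt12 in
/-- Hausdorff approximation: every finite atomless Borel measure `μ` on `[0,1]` is the
weak limit of a sequence of finitely supported (atomic) measures `μₙ` whose supports
converge to the support of `μ` in the Hausdorff metric. -/
theorem statement_12 (μ : Measure ℝ) [IsFiniteMeasure μ]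
    (hconc : μ (Set.Icc (0:ℝ) 1)ᶜ = 0)
    (hatomless : ∀ x : ℝ, μ {x} = 0) :
    ∃ ν : ℕ → Measure ℝ,
      (∀ n, ∃ s : Finset ℝ, ↑s ⊆ Set.Icc (0:ℝ) 1 ∧
        ν n = ∑ x ∈ s, (ν n {x}) • Measure.dirac x) ∧
      (∀ f : BoundedContinuousFunction ℝ ℝ,
        Tendsto (fun n => ∫ x, f x ∂(ν n)) atTop (𝓝 (∫ x, f x ∂μ))) ∧
      Tendsto (fun n => Metric.hausdorffDist (measSupport (ν n)) (measSupport μ))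
        atTop (𝓝 0) := by
  classical
  refine ⟨nu μ, fun n => ?_, fun f => tendsto_integral_nu μ hconc hatomless f, ?_⟩
  · refine ⟨(Finset.range (n+1)).image (apt μ (n+1)), ?_, ?_⟩
    · intro x hx
      simp only [Finset.coe_image, Set.mem_image, Finset.mem_coe, Finset.mem_range] at hx
      obtain ⟨k, hk, rfl⟩ := hx
      exact pc_subset hk (apt_mem_pc μ (Nat.succ_pos n) k)
    · rw [Finset.sum_image (fun k _ l _ h => apt_inj μ (Nat.succ_pos n) h)]
      conv_lhs => rw [nu]
      refine Finset.sum_congr rfl fun k hk => ?_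
      rw [nu_singleton μ (Finset.mem_range.1 hk)]
  · apply squeeze_zero (fun n => Metric.hausdorffDist_nonneg)
      (fun n => hdist_le μ hconc hatomless n)
    have h := tendsto_one_div_add_atTop_nhds_zero_nat.const_mul (2:ℝ)
    simpa [mul_one_div, div_eq_mul_inv] using h
end

section
/- Let G be a group acting by homeomorphisms on a topological space M such that for every point x ∈ M there is an open neighborhood U with {g ∈ G : gU ∩ U ≠ ∅} finite, and suppose a G-invariant subspace T ⊂ M is given such that the G-action on T is properly discontinuous and the inclusion T ↪ M induces a proper map of quotients T/G → M/G. Then the inclusion T ↪ M is a proper embedding. -/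
open Set

/-- Abstract properness of the inclusion `PT(S) ↪ Met(S)`.  `G` acts by homeomorphisms
on a locally compact Hausdorff space `M`, properly discontinuously (every point has a
neighbourhood `U` with `{g | gU ∩ U ≠ ∅}` finite); `T` is a `G`-space embedded
`G`-equivariantly in `M` (a `G`-invariant subspace), on which the action is also
properly discontinuous.  If the induced map of quotients `T/G → M/G` is proper, then
the inclusion `T ↪ M` is a proper embedding. -/
theorem statement_15 {G : Type*} [Group G] {M T : Type*}
    [TopologicalSpace M] [LocallyCompactSpace M] [T2Space M] [MulAction G M]
    [TopologicalSpace T] [MulAction G T]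
    (hcontM : ∀ g : G, Continuous fun x : M => g • x)
    (hcontT : ∀ g : G, Continuous fun x : T => g • x)
    (ι : T → M) (hemb : Topology.IsEmbedding ι)
    (hequiv : ∀ (g : G) (x : T), ι (g • x) = g • ι x)
    (hpdM : ∀ x : M, ∃ U ∈ nhds x, IsOpen U ∧ {g : G | ((g • ·) '' U) ∩ U ≠ ∅}.Finite)
    (hpdT : ∀ x : T, ∃ U ∈ nhds x, IsOpen U ∧ {g : G | ((g • ·) '' U) ∩ U ≠ ∅}.Finite)
    (qmap : Quotient (MulAction.orbitRel G T) → Quotient (MulAction.orbitRel G M))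
    (hqmap : ∀ x : T, qmap (Quotient.mk (MulAction.orbitRel G T) x)
        = Quotient.mk (MulAction.orbitRel G M) (ι x))
    (hproper : IsProperMap qmap) :
    IsProperMap ι := by
  rw [isProperMap_iff_clusterPt]
  refine ⟨hemb.continuous, fun F y hy => ?_⟩
  -- push the cluster point down to the quotients
  have hcomp : (Quotient.mk (MulAction.orbitRel G M)) ∘ ι
      = qmap ∘ (Quotient.mk (MulAction.orbitRel G T)) := by
    funext t; exact (hqmap t).symm
  have hy2 : MapClusterPt (Quotient.mk (MulAction.orbitRel G M) y)
      (Filter.map (Quotient.mk (MulAction.orbitRel G T)) F) qmap := by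
    have := hy.continuousAt_comp ((continuous_quot_mk : Continuous (Quotient.mk (MulAction.orbitRel G M))).continuousAt)
    show ClusterPt _ (Filter.map qmap _)
    rw [Filter.map_map, ← hcomp, ← Filter.map_map]
    exact this
  obtain ⟨q, hq1, -⟩ := hproper.clusterPt_of_mapClusterPt hy2
  obtain ⟨t, rfl⟩ := Quotient.exists_rep q
  rw [hqmap t] at hq1
  have hrel : MulAction.orbitRel G M (ι t) y := Quotient.exact hq1
  rw [MulAction.orbitRel_apply] at hrel
  obtain ⟨g, hg⟩ := hrel
  have hx : ι (g⁻¹ • t) = y := by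
    rw [hequiv, ← hg]; simp
  refine ⟨g⁻¹ • t, hx, ?_⟩
  -- embedding argument: cluster point upstairs
  rw [ClusterPt, ← Filter.map_neBot_iff ι, Filter.map_inf hemb.injective,
    hemb.toIsInducing.nhds_eq_comap, Filter.map_comap, hx]
  have hle : Filter.map ι F ≤ Filter.principal (Set.range ι) :=
    Filter.le_principal_iff.mpr Filter.range_mem_map
  rw [inf_assoc, inf_eq_right.mpr hle]
  exact hy
end
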